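/- arXiv:2011.13101 — 8 statements merged into one kernel-verified Lean document; each statement's English description precedes it below -/
import Mathlib

section
/- For any real sequence g_1,...,g_T, define A_t = sum_{i=1}^t g_i^2 and assume A_t > 0 for all t. Then sqrt(A_T) <= sum_{t=1}^T g_t^2 / sqrt(A_t) <= 2*sqrt(A_T). -/
/-!
Write `a t = √(A t)`. Since `g t ^ 2 = a t ^ 2 - a (t - 1) ^ 2`, each summand is
`(a t - a (t - 1)) * (a t + a (t - 1)) / a t`, and `a t ≤ a t + a (t - 1) ≤ 2 * a t` by monotonicity.
So each summand lies between one and two times the increment `a t - a (t - 1)` (when `A t = 0`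
both vanish, since `x / 0 = 0`), and these increments telescope to `√(A T)`.
-/

open Finset

namespace Real

theorem sqrt_sub_sqrt_le_sub_div_sqrt {a b : ℝ} (ha : 0 ≤ a) (hab : a ≤ b) :
    √b - √a ≤ (b - a) / √b := by
  rcases (ha.trans hab).eq_or_lt with rfl | hb
  · simp [le_antisymm hab ha]
  have hsb : 0 < √b := sqrt_pos.mpr hb
  have hsab : √a ≤ √b := sqrt_le_sqrt hab
  rw [le_div_iff₀ hsb]
  nlinarith [sq_sqrt ha, sq_sqrt hb.le, sqrt_nonneg a]

theorem sub_div_sqrt_le_two_mul_sqrt_sub_sqrt {a b : ℝ} (ha : 0 ≤ a) (hab : a ≤ b) :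
    (b - a) / √b ≤ 2 * (√b - √a) := by
  rcases (ha.trans hab).eq_or_lt with rfl | hb
  · simp [le_antisymm hab ha]
  rw [div_le_iff₀ (sqrt_pos.mpr hb)]
  nlinarith [sq_sqrt ha, sq_sqrt hb.le, sq_nonneg (√b - √a)]

end Real

section Telescoping

variable {A : ℕ → ℝ}

theorem sqrt_sub_sqrt_le_sum_sub_div_sqrt (h0 : 0 ≤ A 0) (hA : Monotone A) (T : ℕ) :
    √(A T) - √(A 0) ≤ ∑ t ∈ Icc 1 T, (A t - A (t - 1)) / √(A t) := by
  induction T with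
  | zero => simp
  | succ T ih =>
    rw [sum_Icc_succ_top (by omega), Nat.add_sub_cancel]
    have := Real.sqrt_sub_sqrt_le_sub_div_sqrt (h0.trans (hA T.zero_le)) (hA T.le_succ)
    linarith

theorem sum_sub_div_sqrt_le_two_mul_sqrt_sub_sqrt (h0 : 0 ≤ A 0) (hA : Monotone A) (T : ℕ) :
    ∑ t ∈ Icc 1 T, (A t - A (t - 1)) / √(A t) ≤ 2 * (√(A T) - √(A 0)) := by
  induction T with
  | zero => simp
  | succ T ih =>
    rw [sum_Icc_succ_top (by omega), Nat.add_sub_cancel]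
    have := Real.sub_div_sqrt_le_two_mul_sqrt_sub_sqrt (h0.trans (hA T.zero_le)) (hA T.le_succ)
    linarith

end Telescoping

theorem stmt0_general (T : ℕ) (g : ℕ → ℝ) (A : ℕ → ℝ)
    (hA : ∀ t, A t = ∑ i ∈ Finset.Icc 1 t, (g i) ^ 2) :
    Real.sqrt (A T) ≤ (∑ t ∈ Finset.Icc 1 T, (g t) ^ 2 / Real.sqrt (A t)) ∧
      (∑ t ∈ Finset.Icc 1 T, (g t) ^ 2 / Real.sqrt (A t)) ≤ 2 * Real.sqrt (A T) := by
  have hA0 : A 0 = 0 := by simp [hA]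
  have hstep : ∀ t, A (t + 1) = A t + g (t + 1) ^ 2 := fun t => by
    rw [hA, hA, sum_Icc_succ_top (by omega)]
  have hmono : Monotone A :=
    monotone_nat_of_le_succ fun t => by rw [hstep]; exact le_add_of_nonneg_right (sq_nonneg _)
  have hincr : ∑ t ∈ Icc 1 T, g t ^ 2 / √(A t) = ∑ t ∈ Icc 1 T, (A t - A (t - 1)) / √(A t) := by
    refine sum_congr rfl fun t ht => ?_
    obtain ⟨s, rfl⟩ := Nat.exists_eq_add_of_le' (mem_Icc.mp ht).1
    rw [hstep, Nat.add_sub_cancel, add_sub_cancel_left]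
  have lower := sqrt_sub_sqrt_le_sum_sub_div_sqrt hA0.ge hmono T
  have upper := sum_sub_div_sqrt_le_two_mul_sqrt_sub_sqrt hA0.ge hmono T
  rw [hA0, Real.sqrt_zero, sub_zero] at lower upper
  exact hincr ▸ ⟨lower, upper⟩

theorem stmt0 (T : ℕ) (hT : 1 ≤ T) (g : ℕ → ℝ) (A : ℕ → ℝ)
    (hA : ∀ t, A t = ∑ i ∈ Finset.Icc 1 t, (g i) ^ 2)
    (hpos : ∀ t, 1 ≤ t → t ≤ T → 0 < A t) :
    Real.sqrt (A T) ≤ (∑ t ∈ Finset.Icc 1 T, (g t) ^ 2 / Real.sqrt (A t)) ∧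
      (∑ t ∈ Finset.Icc 1 T, (g t) ^ 2 / Real.sqrt (A t)) ≤ 2 * Real.sqrt (A T) :=
  stmt0_general T g A hA
end

section
/- Let A be an n-by-n real matrix satisfying ||A^t|| <= C*rho^t for all t >= 0, with C >= 1 and rho in (0,1). For arbitrary matrices Delta_1,...,Delta_t, the product satisfies ||prod_{i=1}^t (A + Delta_i)|| <= C * prod_{i=1}^t (rho + C*||Delta_i||), where the product of matrices is taken in order. -/
set_option synthInstance.maxHeartbeats 1000000
set_option maxHeartbeats 1000000

lemma stmt1_aux (n : ℕ) (C ρ : ℝ) (hC : 1 ≤ C) (hρ0 : 0 < ρ)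
    (A : EuclideanSpace ℝ (Fin n) →L[ℝ] EuclideanSpace ℝ (Fin n))
    (hA : ∀ t : ℕ, ‖A ^ t‖ ≤ C * ρ ^ t)
    (L : List (EuclideanSpace ℝ (Fin n) →L[ℝ] EuclideanSpace ℝ (Fin n))) :
    ∀ s : ℕ, ‖A ^ s * (L.map (fun D => A + D)).prod‖ ≤
      C * ρ ^ s * (L.map (fun D => ρ + C * ‖D‖)).prod := by
  induction L with
  | nil => intro s; simpa using hA s
  | cons D L ih =>
    intro s
    set P := (L.map (fun D => A + D)).prod with hP
    set Q := (L.map (fun D => ρ + C * ‖D‖)).prod with hQ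
    have hQ0 : 0 ≤ Q := by
      apply List.prod_nonneg
      intro x hx
      simp only [List.mem_map] at hx
      obtain ⟨y, -, rfl⟩ := hx
      positivity
    have key : A ^ s * ((D :: L).map (fun D => A + D)).prod
        = A ^ (s + 1) * P + A ^ s * (D * P) := by
      simp [List.prod_cons, add_mul, mul_add, pow_succ, mul_assoc, ← hP]
    have h1 : ‖A ^ (s + 1) * P‖ ≤ C * ρ ^ (s + 1) * Q := ih (s + 1)
    have h2 : ‖P‖ ≤ C * Q := by simpa using ih 0
    have h3 : ‖A ^ s * (D * P)‖ ≤ (C * ρ ^ s) * (‖D‖ * (C * Q)) := by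
      calc ‖A ^ s * (D * P)‖ ≤ ‖A ^ s‖ * ‖D * P‖ := norm_mul_le _ _
        _ ≤ ‖A ^ s‖ * (‖D‖ * ‖P‖) :=
            mul_le_mul_of_nonneg_left (norm_mul_le _ _) (norm_nonneg _)
        _ ≤ (C * ρ ^ s) * (‖D‖ * (C * Q)) := by
            apply mul_le_mul (hA s) ?_ (by positivity) (by positivity)
            exact mul_le_mul_of_nonneg_left h2 (norm_nonneg _)
    rw [key]
    calc ‖A ^ (s + 1) * P + A ^ s * (D * P)‖
        ≤ ‖A ^ (s + 1) * P‖ + ‖A ^ s * (D * P)‖ := norm_add_le _ _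
      _ ≤ C * ρ ^ (s + 1) * Q + (C * ρ ^ s) * (‖D‖ * (C * Q)) := add_le_add h1 h3
      _ = C * ρ ^ s * (((D :: L).map (fun D => ρ + C * ‖D‖)).prod) := by
          simp only [List.map_cons, List.prod_cons, ← hQ]; ring

theorem stmt1 (n : ℕ) (C ρ : ℝ) (hC : 1 ≤ C) (hρ0 : 0 < ρ) (hρ1 : ρ < 1)
    (A : EuclideanSpace ℝ (Fin n) →L[ℝ] EuclideanSpace ℝ (Fin n))
    (hA : ∀ t : ℕ, ‖A ^ t‖ ≤ C * ρ ^ t)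
    (t : ℕ) (ht : 1 ≤ t)
    (Δ : Fin t → (EuclideanSpace ℝ (Fin n) →L[ℝ] EuclideanSpace ℝ (Fin n))) :
    ‖(List.ofFn (fun i : Fin t => A + Δ i)).prod‖ ≤ C * ∏ i : Fin t, (ρ + C * ‖Δ i‖) := by
  have h := stmt1_aux n C ρ hC hρ0 A hA (List.ofFn Δ) 0
  rw [List.map_ofFn, List.map_ofFn] at h
  simp only [Function.comp_def, pow_zero, one_mul, List.prod_ofFn] at h
  simpa using h
end

section
/- Let f : R^n x N -> R^n be a discrete-time system that is contracting with rate gamma in (0,1) in a metric M(x,t) satisfying mu*I <= M(x,t) <= L*I for all x,t with mu > 0. Then f is (sqrt(L/mu), sqrt(gamma), sqrt(L/mu))-exponentially-incrementally-input-to-state-stable: for any initial conditions x_0, y_0 and any input signal u_t, the trajectories x_{t+1} = f(x_t,t) + u_t and y_{t+1} = f(y_t,t) satisfy ||x_t - y_t|| <= sqrt(L/mu) * gamma^{t/2} * ||x_0 - y_0|| + sqrt(L/mu) * sum_{k=0}^{t-1} gamma^{(t-1-k)/2} * ||u_k||. -/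
local notation "⟪" x ", " y "⟫" => @inner ℝ _ _ x y

/-!
The metric energy `⟪v, M x t v⟫` of a tangent vector carried along the linearised flow drops by a
factor `γ` per step, so by `μ I ≤ M ≤ L I` the `k`-step derivative of the unforced flow has operator
norm at most `√(L/μ) √γ ^ k`. The mean value inequality along straight segments turns this into a
Lipschitz bound for the `k`-step map. The forced trajectory `x` is compared with `y` by telescoping
through the trajectories that follow `x` up to time `k` and then run unforced: two consecutive ones
differ at time `k + 1` by exactly `u k`, and from then on are both unforced.
-/

namespace DiscreteSystem

open Finset Set

section Flow

variable {α : Type*}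

/-- The state at time `t₀ + k` of the unforced system started at `z` at time `t₀`. -/
def flow (f : α → ℕ → α) (t₀ : ℕ) (z : α) : ℕ → α
  | 0 => z
  | k + 1 => f (flow f t₀ z k) (t₀ + k)

variable {f : α → ℕ → α}

theorem flow_succ' (t₀ : ℕ) (z : α) (k : ℕ) :
    flow f t₀ z (k + 1) = flow f (t₀ + 1) (f z t₀) k := by
  induction k with
  | zero => rfl
  | succ k ih => rw [flow, ih, flow]; congr 1; omega

theorem eq_flow_of_step {x : ℕ → α} (hx : ∀ t, x (t + 1) = f (x t) t) (t : ℕ) :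
    x t = flow f 0 (x 0) t := by
  induction t with
  | zero => rfl
  | succ t ih => rw [hx, ih, flow, zero_add]

end Flow

variable {E : Type*} [NormedAddCommGroup E] [InnerProductSpace ℝ E]

def IsContracting (f : E → ℕ → E) (M : E → ℕ → E →L[ℝ] E) (γ : ℝ) : Prop :=
  ∀ x t v, ⟪fderiv ℝ (f · t) x v, M (f x t) (t + 1) (fderiv ℝ (f · t) x v)⟫ ≤ γ * ⟪v, M x t v⟫

noncomputable def flowDeriv (f : E → ℕ → E) (t₀ : ℕ) (z : E) : ℕ → E →L[ℝ] E
  | 0 => ContinuousLinearMap.id ℝ E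
  | k + 1 => fderiv ℝ (f · (t₀ + k)) (flow f t₀ z k) ∘L flowDeriv f t₀ z k

variable {f : E → ℕ → E}

theorem hasFDerivAt_flow (hf : ∀ t, Differentiable ℝ (f · t)) (t₀ : ℕ) (z : E) (k : ℕ) :
    HasFDerivAt (flow f t₀ · k) (flowDeriv f t₀ z k) z := by
  induction k with
  | zero => exact hasFDerivAt_id z
  | succ k ih => exact (hf (t₀ + k) _).hasFDerivAt.comp z ih

variable {M : E → ℕ → E →L[ℝ] E} {γ μ L : ℝ}

theorem sqrt_inner_flowDeriv_le (hγ : 0 ≤ γ) (hcontr : IsContracting f M γ)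
    (t₀ : ℕ) (z v : E) (k : ℕ) :
    √⟪flowDeriv f t₀ z k v, M (flow f t₀ z k) (t₀ + k) (flowDeriv f t₀ z k v)⟫ ≤
      √γ ^ k * √⟪v, M z t₀ v⟫ := by
  induction k with
  | zero => simp [flow, flowDeriv]
  | succ k ih =>
    set w := flowDeriv f t₀ z k v
    calc _ ≤ √(γ * ⟪w, M (flow f t₀ z k) (t₀ + k) w⟫) := Real.sqrt_le_sqrt (hcontr _ _ _)
      _ = √γ * √⟪w, M (flow f t₀ z k) (t₀ + k) w⟫ := Real.sqrt_mul hγ _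
      _ ≤ √γ * (√γ ^ k * √⟪v, M z t₀ v⟫) := by gcongr
      _ = √γ ^ (k + 1) * √⟪v, M z t₀ v⟫ := by ring

theorem norm_flowDeriv_apply_le (hμ : 0 < μ) (hγ : 0 ≤ γ)
    (hlow : ∀ x t v, μ * ‖v‖ ^ 2 ≤ ⟪v, M x t v⟫) (hupp : ∀ x t v, ⟪v, M x t v⟫ ≤ L * ‖v‖ ^ 2)
    (hcontr : IsContracting f M γ) (t₀ : ℕ) (z v : E) (k : ℕ) :
    ‖flowDeriv f t₀ z k v‖ ≤ √(L / μ) * √γ ^ k * ‖v‖ := by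
  set w := flowDeriv f t₀ z k v
  have hw : √μ * ‖w‖ ≤ √γ ^ k * (√L * ‖v‖) := calc
    √μ * ‖w‖ = √(μ * ‖w‖ ^ 2) := by rw [Real.sqrt_mul hμ.le, Real.sqrt_sq (norm_nonneg _)]
    _ ≤ √⟪w, M (flow f t₀ z k) (t₀ + k) w⟫ := Real.sqrt_le_sqrt (hlow _ _ _)
    _ ≤ √γ ^ k * √⟪v, M z t₀ v⟫ := sqrt_inner_flowDeriv_le hγ hcontr t₀ z v k
    _ ≤ √γ ^ k * √(L * ‖v‖ ^ 2) := by gcongr; exact hupp _ _ _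
    _ = √γ ^ k * (√L * ‖v‖) := by rw [Real.sqrt_mul' _ (sq_nonneg _), Real.sqrt_sq (norm_nonneg _)]
  rw [Real.sqrt_div' _ hμ.le, div_mul_eq_mul_div, div_mul_eq_mul_div,
    le_div_iff₀ (Real.sqrt_pos.2 hμ)]
  linarith

theorem norm_flow_sub_flow_le (hf : ∀ t, Differentiable ℝ (f · t)) (hμ : 0 < μ) (hγ : 0 ≤ γ)
    (hlow : ∀ x t v, μ * ‖v‖ ^ 2 ≤ ⟪v, M x t v⟫) (hupp : ∀ x t v, ⟪v, M x t v⟫ ≤ L * ‖v‖ ^ 2)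
    (hcontr : IsContracting f M γ) (t₀ : ℕ) (z w : E) (k : ℕ) :
    ‖flow f t₀ z k - flow f t₀ w k‖ ≤ √(L / μ) * √γ ^ k * ‖z - w‖ :=
  convex_univ.norm_image_sub_le_of_norm_hasFDerivWithin_le
    (fun p _ => (hasFDerivAt_flow hf t₀ p k).hasFDerivWithinAt)
    (fun p _ => ContinuousLinearMap.opNorm_le_bound _ (by positivity)
      (norm_flowDeriv_apply_le hμ hγ hlow hupp hcontr t₀ p · k))
    (mem_univ w) (mem_univ z)

end DiscreteSystem

open DiscreteSystem Finset

theorem stmt4_general (n : ℕ) (γ μ L : ℝ) (hγ0 : 0 < γ) (hμ : 0 < μ)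
    (f : EuclideanSpace ℝ (Fin n) → ℕ → EuclideanSpace ℝ (Fin n))
    (M : EuclideanSpace ℝ (Fin n) → ℕ →
      (EuclideanSpace ℝ (Fin n) →L[ℝ] EuclideanSpace ℝ (Fin n)))
    (hdiff : ∀ t, Differentiable ℝ (fun x => f x t))
    (hlow : ∀ x t v, μ * ‖v‖ ^ 2 ≤ ⟪v, (M x t) v⟫)
    (hupp : ∀ x t v, ⟪v, (M x t) v⟫ ≤ L * ‖v‖ ^ 2)
    (hcontr : ∀ x t v,
      ⟪(fderiv ℝ (fun z => f z t) x) v,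
          (M (f x t) (t + 1)) ((fderiv ℝ (fun z => f z t) x) v)⟫ ≤ γ * ⟪v, (M x t) v⟫)
    (x y u : ℕ → EuclideanSpace ℝ (Fin n))
    (hx : ∀ t, x (t + 1) = f (x t) t + u t)
    (hy : ∀ t, y (t + 1) = f (y t) t) :
    ∀ t, ‖x t - y t‖ ≤
      Real.sqrt (L / μ) * Real.sqrt γ ^ t * ‖x 0 - y 0‖ +
        Real.sqrt (L / μ) * ∑ k ∈ Finset.range t, Real.sqrt γ ^ (t - 1 - k) * ‖u k‖ := by
  intro t
  have hlip := norm_flow_sub_flow_le hdiff hμ hγ0.le hlow hupp hcontr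
  set g := fun k => flow f k (x k) (t - k)
  have hg : ∀ k ∈ range t, ‖g (k + 1) - g k‖ ≤ √(L / μ) * √γ ^ (t - 1 - k) * ‖u k‖ := by
    intro k hk
    have hkt := mem_range.1 hk
    have hu : x (k + 1) - f (x k) k = u k := by rw [hx, add_sub_cancel_left]
    simpa only [g, show t - k = t - 1 - k + 1 by omega, show t - (k + 1) = t - 1 - k by omega,
      flow_succ', hu] using hlip (k + 1) (x (k + 1)) (f (x k) k) (t - 1 - k)
  have htel : x t - y t = ∑ k ∈ range t, (g (k + 1) - g k) + (g 0 - y t) := by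
    rw [sum_range_sub]
    simp only [g, Nat.sub_self, flow]
    abel
  calc ‖x t - y t‖ ≤ ∑ k ∈ range t, ‖g (k + 1) - g k‖ + ‖g 0 - y t‖ := by
        rw [htel]; exact (norm_add_le _ _).trans (by gcongr; exact norm_sum_le _ _)
    _ ≤ ∑ k ∈ range t, √(L / μ) * √γ ^ (t - 1 - k) * ‖u k‖ + √(L / μ) * √γ ^ t * ‖x 0 - y 0‖ := by
        gcongr with k hk
        · exact hg k hk
        · simpa only [g, Nat.sub_zero, ← eq_flow_of_step hy t] using hlip 0 (x 0) (y 0) t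
    _ = _ := by simp only [mul_sum, mul_assoc, add_comm]

theorem stmt4 (n : ℕ) (γ μ L : ℝ) (hγ0 : 0 < γ) (hγ1 : γ < 1) (hμ : 0 < μ) (hL : 0 < L)
    (f : EuclideanSpace ℝ (Fin n) → ℕ → EuclideanSpace ℝ (Fin n))
    (M : EuclideanSpace ℝ (Fin n) → ℕ →
      (EuclideanSpace ℝ (Fin n) →L[ℝ] EuclideanSpace ℝ (Fin n)))
    (hdiff : ∀ t, Differentiable ℝ (fun x => f x t))
    (hlow : ∀ x t v, μ * ‖v‖ ^ 2 ≤ ⟪v, (M x t) v⟫)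
    (hupp : ∀ x t v, ⟪v, (M x t) v⟫ ≤ L * ‖v‖ ^ 2)
    (hcontr : ∀ x t v,
      ⟪(fderiv ℝ (fun z => f z t) x) v,
          (M (f x t) (t + 1)) ((fderiv ℝ (fun z => f z t) x) v)⟫ ≤ γ * ⟪v, (M x t) v⟫)
    (x y u : ℕ → EuclideanSpace ℝ (Fin n))
    (hx : ∀ t, x (t + 1) = f (x t) t + u t)
    (hy : ∀ t, y (t + 1) = f (y t) t) :
    ∀ t, ‖x t - y t‖ ≤
      Real.sqrt (L / μ) * Real.sqrt γ ^ t * ‖x 0 - y 0‖ +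
        Real.sqrt (L / μ) * ∑ k ∈ Finset.range t, Real.sqrt γ ^ (t - 1 - k) * ‖u k‖ :=
  stmt4_general n γ μ L hγ0 hμ f M hdiff hlow hupp hcontr x y u hx hy
end

section
/- Let f(x,t) be contracting with rate gamma in (0,1) in a metric M(x,t) with M(x,t) >= mu*I > 0, where x -> M(x,t) is L_M-Lipschitz for every t, and ||df/dx(x,t)|| <= L_f for all x,t. Let {w_t} be a sequence with sup_t ||w_t|| <= W. If W <= mu*(1-gamma)/(L_f^2 * L_M), then the perturbed dynamics g(x,t) := f(x,t) + w_t is contracting with rate gamma + L_f^2 * L_M * W / mu in the metric M(x,t). -/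
local notation "⟪" x ", " y "⟫" => @inner ℝ _ _ x y

theorem stmt5 (n : ℕ) (γ μ Lf LM W : ℝ)
    (hγ0 : 0 < γ) (hγ1 : γ < 1) (hμ : 0 < μ) (hLf : 0 < Lf) (hLM : 0 < LM) (hW0 : 0 ≤ W)
    (f : EuclideanSpace ℝ (Fin n) → ℕ → EuclideanSpace ℝ (Fin n))
    (M : EuclideanSpace ℝ (Fin n) → ℕ →
      (EuclideanSpace ℝ (Fin n) →L[ℝ] EuclideanSpace ℝ (Fin n)))
    (hdiff : ∀ t, Differentiable ℝ (fun x => f x t))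
    (hlow : ∀ x t v, μ * ‖v‖ ^ 2 ≤ ⟪v, (M x t) v⟫)
    (hLip : ∀ x y t, ‖M x t - M y t‖ ≤ LM * ‖x - y‖)
    (hJac : ∀ x t, ‖fderiv ℝ (fun z => f z t) x‖ ≤ Lf)
    (hcontr : ∀ x t v,
      ⟪(fderiv ℝ (fun z => f z t) x) v,
          (M (f x t) (t + 1)) ((fderiv ℝ (fun z => f z t) x) v)⟫ ≤ γ * ⟪v, (M x t) v⟫)
    (w : ℕ → EuclideanSpace ℝ (Fin n)) (hw : ∀ t, ‖w t‖ ≤ W)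
    (hWsmall : W ≤ μ * (1 - γ) / (Lf ^ 2 * LM)) :
    ∀ x t v,
      ⟪(fderiv ℝ (fun z => f z t + w t) x) v,
          (M (f x t + w t) (t + 1)) ((fderiv ℝ (fun z => f z t + w t) x) v)⟫ ≤
        (γ + Lf ^ 2 * LM * W / μ) * ⟪v, (M x t) v⟫ := by
  intro x t v
  have hfd : fderiv ℝ (fun z => f z t + w t) x = fderiv ℝ (fun z => f z t) x :=
    fderiv_add_const (w t)
  rw [hfd]
  set J := fderiv ℝ (fun z => f z t) x with hJ
  set u := J v with hu
  have hnormu : ‖u‖ ≤ Lf * ‖v‖ := by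
    calc ‖u‖ ≤ ‖J‖ * ‖v‖ := J.le_opNorm v
    _ ≤ Lf * ‖v‖ := by
        exact mul_le_mul_of_nonneg_right (hJac x t) (norm_nonneg v)
  have hsplit : ⟪u, (M (f x t + w t) (t + 1)) u⟫ =
      ⟪u, (M (f x t) (t + 1)) u⟫ +
      ⟪u, ((M (f x t + w t) (t + 1)) - (M (f x t) (t + 1))) u⟫ := by
    simp [ContinuousLinearMap.sub_apply, inner_sub_right]
  have hMdiff : ‖(M (f x t + w t) (t + 1)) - (M (f x t) (t + 1))‖ ≤ LM * W := by
    calc ‖(M (f x t + w t) (t + 1)) - (M (f x t) (t + 1))‖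
        ≤ LM * ‖(f x t + w t) - f x t‖ := hLip _ _ _
    _ = LM * ‖w t‖ := by rw [add_sub_cancel_left]
    _ ≤ LM * W := mul_le_mul_of_nonneg_left (hw t) hLM.le
  have hpert : ⟪u, ((M (f x t + w t) (t + 1)) - (M (f x t) (t + 1))) u⟫ ≤
      LM * W * (Lf * ‖v‖) ^ 2 := by
    calc ⟪u, ((M (f x t + w t) (t + 1)) - (M (f x t) (t + 1))) u⟫
        ≤ ‖u‖ * ‖((M (f x t + w t) (t + 1)) - (M (f x t) (t + 1))) u‖ :=
          real_inner_le_norm _ _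
    _ ≤ ‖u‖ * (‖(M (f x t + w t) (t + 1)) - (M (f x t) (t + 1))‖ * ‖u‖) := by
          exact mul_le_mul_of_nonneg_left (ContinuousLinearMap.le_opNorm _ _) (norm_nonneg u)
    _ ≤ (Lf * ‖v‖) * ((LM * W) * (Lf * ‖v‖)) := by
          apply mul_le_mul hnormu _ (by positivity) (by positivity)
          exact mul_le_mul hMdiff hnormu (norm_nonneg u) (by positivity)
    _ = LM * W * (Lf * ‖v‖) ^ 2 := by ring
  have hv2 : ‖v‖ ^ 2 ≤ ⟪v, (M x t) v⟫ / μ := by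
    rw [le_div_iff₀ hμ]
    linarith [hlow x t v]
  have h1 : ⟪u, (M (f x t) (t + 1)) u⟫ ≤ γ * ⟪v, (M x t) v⟫ := hcontr x t v
  have h2 : LM * W * (Lf * ‖v‖) ^ 2 ≤ Lf ^ 2 * LM * W / μ * ⟪v, (M x t) v⟫ := by
    have : LM * W * (Lf * ‖v‖) ^ 2 = (Lf ^ 2 * LM * W) * ‖v‖ ^ 2 := by ring
    rw [this]
    calc (Lf ^ 2 * LM * W) * ‖v‖ ^ 2 ≤ (Lf ^ 2 * LM * W) * (⟪v, (M x t) v⟫ / μ) := by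
          exact mul_le_mul_of_nonneg_left hv2 (by positivity)
    _ = Lf ^ 2 * LM * W / μ * ⟪v, (M x t) v⟫ := by ring
  calc ⟪u, (M (f x t + w t) (t + 1)) u⟫
      = ⟪u, (M (f x t) (t + 1)) u⟫ +
        ⟪u, ((M (f x t + w t) (t + 1)) - (M (f x t) (t + 1))) u⟫ := hsplit
  _ ≤ γ * ⟪v, (M x t) v⟫ + LM * W * (Lf * ‖v‖) ^ 2 := add_le_add h1 hpert
  _ ≤ γ * ⟪v, (M x t) v⟫ + Lf ^ 2 * LM * W / μ * ⟪v, (M x t) v⟫ := by linarith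
  _ = (γ + Lf ^ 2 * LM * W / μ) * ⟪v, (M x t) v⟫ := by ring
end

section
/- Suppose the discrete-time system g(x,t) = f(x,t) + w_t is (beta, rho, gamma)-E-delta-ISS for every noise realization with sup_t ||w_t|| <= W, and ||B(x,t)|| <= M, ||Y(x,t)|| <= M, and the parameter error satisfies ||tilde_alpha_t|| <= 2D. Let x^a and x^c be trajectories with the same initial condition x_0 and same noise, where x^a_{t+1} = f(x^a_t,t) + B_t Y_t tilde_alpha_t + w_t and x^c_{t+1} = f(x^c_t,t) + w_t. Then with B_x := beta*||x_0|| + gamma*(2DM^2 + W)/(1-rho), we have for all T >= 1: sum_{t=0}^{T-1} (||x^a_t||^2 - ||x^c_t||^2) <= (2*B_x*gamma/(1-rho)) * sqrt(T) * sqrt(sum_{t=0}^{T-1} ||B_t Y_t tilde_alpha_t||^2). -/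
/-!
Both trajectories start at `x₀` and feel the same noise, so the input-to-state estimate of the
noisy system, with `B_t Y_t α̃_t` as input, bounds `‖xᵃ_t - xᶜ_t‖` by `γ` times a discounted sum of
the past inputs. Comparing each trajectory with the zero trajectory of the noise-free system bounds
both norms by `B_x`, so `‖xᵃ_t‖² - ‖xᶜ_t‖² ≤ 2 B_x ‖xᵃ_t - xᶜ_t‖`. Summing over `t < T`, every input
is counted with total weight at most `1 / (1 - ρ)`, and Cauchy–Schwarz turns the plain sum of the
input norms into `√T` times their `ℓ²` norm.
-/

open Finset

noncomputable def discountedSum (ρ : ℝ) (a : ℕ → ℝ) (t : ℕ) : ℝ :=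
  ∑ k ∈ range t, ρ ^ (t - 1 - k) * a k

section DiscountedSum

variable {ρ : ℝ} {a : ℕ → ℝ}

lemma sum_Ico_succ_pow_sub_le (hρ0 : 0 ≤ ρ) (hρ1 : ρ < 1) (m n : ℕ) :
    ∑ t ∈ Ico (m + 1) n, ρ ^ (t - 1 - m) ≤ 1 / (1 - ρ) := by
  have hexp : ∀ j, m + 1 + j - 1 - m = j := by omega
  rw [sum_Ico_eq_sum_range]
  simpa [hexp] using geom_sum_Ico_le_of_lt_one (m := 0) (n := n - (m + 1)) hρ0 hρ1

lemma discountedSum_le (hρ0 : 0 ≤ ρ) (hρ1 : ρ < 1) {C : ℝ} (hC : 0 ≤ C) (ha : ∀ k, a k ≤ C)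
    (t : ℕ) : discountedSum ρ a t ≤ C / (1 - ρ) :=
  calc discountedSum ρ a t ≤ ∑ k ∈ range t, ρ ^ (t - 1 - k) * C := by
        unfold discountedSum; gcongr with k; exact ha k
    _ = C * ∑ k ∈ range t, ρ ^ k := by rw [← sum_mul, sum_range_reflect (ρ ^ ·) t, mul_comm]
    _ ≤ C * (1 / (1 - ρ)) := by
        gcongr; simpa using geom_sum_Ico_le_of_lt_one (m := 0) (n := t) hρ0 hρ1
    _ = C / (1 - ρ) := mul_one_div C _

lemma sum_discountedSum_le (hρ0 : 0 ≤ ρ) (hρ1 : ρ < 1) (ha : ∀ k, 0 ≤ a k) (T : ℕ) :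
    ∑ t ∈ range T, discountedSum ρ a t ≤ (∑ k ∈ range T, a k) / (1 - ρ) := by
  unfold discountedSum
  rw [sum_comm' (t' := range T) (s' := fun k => Ico (k + 1) T) (by intro t k; simp only [mem_range, mem_Ico]; omega),
    sum_div]
  gcongr with k
  rw [← sum_mul, mul_comm, div_eq_mul_one_div]
  gcongr
  · exact ha k
  · exact sum_Ico_succ_pow_sub_le hρ0 hρ1 k T

end DiscountedSum

section ISS

variable {E : Type*} [SeminormedAddCommGroup E]

/-- (β, ρ, γ)-E-δ-ISS of the system `x_{t+1} = g(x_t, t)`. -/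
def IsExpIncrISS (g : E → ℕ → E) (β ρ γ : ℝ) : Prop :=
  ∀ x y u : ℕ → E, (∀ t, x (t + 1) = g (x t) t + u t) → (∀ t, y (t + 1) = g (y t) t) →
    ∀ t, ‖x t - y t‖ ≤ β * ρ ^ t * ‖x 0 - y 0‖ + γ * discountedSum ρ (fun k => ‖u k‖) t

variable {g : E → ℕ → E} {β ρ γ : ℝ} {x y u : ℕ → E}

lemma IsExpIncrISS.norm_sub_le_of_eq (h : IsExpIncrISS g β ρ γ)
    (hx : ∀ t, x (t + 1) = g (x t) t + u t) (hy : ∀ t, y (t + 1) = g (y t) t) (h0 : x 0 = y 0)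
    (t : ℕ) : ‖x t - y t‖ ≤ γ * discountedSum ρ (fun k => ‖u k‖) t := by
  simpa [h0] using h x y u hx hy t

lemma IsExpIncrISS.norm_le (h : IsExpIncrISS g β ρ γ) (hβ : 0 ≤ β) (hρ0 : 0 ≤ ρ) (hρ1 : ρ < 1)
    (hγ : 0 ≤ γ) (hg0 : ∀ t, g 0 t = 0) (hx : ∀ t, x (t + 1) = g (x t) t + u t) {C : ℝ}
    (hu : ∀ t, ‖u t‖ ≤ C) (t : ℕ) : ‖x t‖ ≤ β * ‖x 0‖ + γ * C / (1 - ρ) :=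
  calc ‖x t‖ ≤ β * ρ ^ t * ‖x 0‖ + γ * discountedSum ρ (fun k => ‖u k‖) t := by
        simpa using h x 0 u hx (fun t => (hg0 t).symm) t
    _ ≤ β * 1 * ‖x 0‖ + γ * (C / (1 - ρ)) := by
        gcongr
        · exact pow_le_one₀ hρ0 hρ1.le
        · exact discountedSum_le hρ0 hρ1 ((norm_nonneg _).trans (hu 0)) hu t
    _ = β * ‖x 0‖ + γ * C / (1 - ρ) := by rw [mul_one, mul_div_assoc]

end ISS

lemma sq_norm_sub_sq_norm_le {E : Type*} [SeminormedAddCommGroup E] {x y : E} {R : ℝ}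
    (hx : ‖x‖ ≤ R) (hy : ‖y‖ ≤ R) : ‖x‖ ^ 2 - ‖y‖ ^ 2 ≤ 2 * R * ‖x - y‖ := by
  nlinarith [abs_le.mp (abs_norm_sub_norm_le x y), norm_nonneg x, norm_nonneg y]

lemma sum_sq_norm_sub_sq_norm_le {E : Type*} [SeminormedAddCommGroup E] {x y : ℕ → E}
    {R ρ γ : ℝ} {a : ℕ → ℝ} (hx : ∀ t, ‖x t‖ ≤ R) (hy : ∀ t, ‖y t‖ ≤ R) (hρ0 : 0 ≤ ρ)
    (hρ1 : ρ < 1) (hγ : 0 ≤ γ) (ha : ∀ k, 0 ≤ a k)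
    (hxy : ∀ t, ‖x t - y t‖ ≤ γ * discountedSum ρ a t) (T : ℕ) :
    ∑ t ∈ range T, (‖x t‖ ^ 2 - ‖y t‖ ^ 2) ≤
      2 * R * γ / (1 - ρ) * √T * √(∑ t ∈ range T, a t ^ 2) := by
  have hR : 0 ≤ R := (norm_nonneg _).trans (hx 0)
  have hρ : 0 < 1 - ρ := sub_pos.mpr hρ1
  calc ∑ t ∈ range T, (‖x t‖ ^ 2 - ‖y t‖ ^ 2)
      ≤ ∑ t ∈ range T, 2 * R * (γ * discountedSum ρ a t) := by
        gcongr with t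
        exact (sq_norm_sub_sq_norm_le (hx t) (hy t)).trans (by gcongr; exact hxy t)
    _ = 2 * R * γ * ∑ t ∈ range T, discountedSum ρ a t := by
        rw [mul_sum]; simp only [mul_assoc]
    _ ≤ 2 * R * γ * ((∑ t ∈ range T, 1 * a t) / (1 - ρ)) := by
        gcongr; simpa using sum_discountedSum_le hρ0 hρ1 ha T
    _ ≤ 2 * R * γ * (√(∑ t ∈ range T, 1 ^ 2) * √(∑ t ∈ range T, a t ^ 2) / (1 - ρ)) := by
        gcongr; exact Real.sum_mul_le_sqrt_mul_sqrt _ _ _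
    _ = 2 * R * γ / (1 - ρ) * √T * √(∑ t ∈ range T, a t ^ 2) := by
        simp only [one_pow, sum_const, card_range, nsmul_eq_mul, mul_one]; ring

theorem stmt14_general (n d p : ℕ) (β ρ γ W D M : ℝ)
    (hβ : 0 < β) (hρ0 : 0 < ρ) (hρ1 : ρ < 1) (hγ : 0 < γ)
    (f : EuclideanSpace ℝ (Fin n) → ℕ → EuclideanSpace ℝ (Fin n))
    (hf0 : ∀ t, f 0 t = 0)
    -- the system f perturbed by any admissible noise sequence is (β,ρ,γ)-E-δISS
    (hiss : ∀ w : ℕ → EuclideanSpace ℝ (Fin n), (∀ t, ‖w t‖ ≤ W) →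
      ∀ (xp yq u : ℕ → EuclideanSpace ℝ (Fin n)),
        (∀ t, xp (t + 1) = f (xp t) t + w t + u t) →
        (∀ t, yq (t + 1) = f (yq t) t + w t) →
        ∀ t, ‖xp t - yq t‖ ≤ β * ρ ^ t * ‖xp 0 - yq 0‖ +
          γ * ∑ k ∈ Finset.range t, ρ ^ (t - 1 - k) * ‖u k‖)
    (w : ℕ → EuclideanSpace ℝ (Fin n)) (hw : ∀ t, ‖w t‖ ≤ W)
    (B : ℕ → (EuclideanSpace ℝ (Fin d) →L[ℝ] EuclideanSpace ℝ (Fin n)))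
    (Y : ℕ → (EuclideanSpace ℝ (Fin p) →L[ℝ] EuclideanSpace ℝ (Fin d)))
    (tilα : ℕ → EuclideanSpace ℝ (Fin p))
    (hB : ∀ t, ‖B t‖ ≤ M) (hY : ∀ t, ‖Y t‖ ≤ M) (htil : ∀ t, ‖tilα t‖ ≤ 2 * D)
    (x0 : EuclideanSpace ℝ (Fin n))
    (xa xc : ℕ → EuclideanSpace ℝ (Fin n)) (hxa0 : xa 0 = x0) (hxc0 : xc 0 = x0)
    (hxa : ∀ t, xa (t + 1) = f (xa t) t + (B t) ((Y t) (tilα t)) + w t)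
    (hxc : ∀ t, xc (t + 1) = f (xc t) t + w t) :
    ∀ T : ℕ, 1 ≤ T →
      ∑ t ∈ Finset.range T, (‖xa t‖ ^ 2 - ‖xc t‖ ^ 2) ≤
        (2 * (β * ‖x0‖ + γ * (2 * D * M ^ 2 + W) / (1 - ρ)) * γ / (1 - ρ)) *
          Real.sqrt T *
          Real.sqrt (∑ t ∈ Finset.range T, ‖(B t) ((Y t) (tilα t))‖ ^ 2) := by
  intro T _
  have hu : ∀ t, ‖B t (Y t (tilα t))‖ ≤ 2 * D * M ^ 2 := fun t => by
    have hM : 0 ≤ M := (norm_nonneg _).trans (hB t)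
    calc ‖B t (Y t (tilα t))‖ ≤ M * (M * (2 * D)) :=
          ((B t).le_of_opNorm_le (hB t) _).trans <| by
            gcongr; exact ((Y t).le_of_opNorm_le (hY t) _).trans (by gcongr; exact htil t)
      _ = 2 * D * M ^ 2 := by ring
  have hISS_noiseless : IsExpIncrISS (fun x t => f x t + 0) β ρ γ :=
    hiss 0 fun _ => by simpa using (norm_nonneg _).trans (hw 0)
  have hg0 : ∀ t, f 0 t + 0 = 0 := by simp [hf0]
  have hxa_le : ∀ t, ‖xa t‖ ≤ β * ‖x0‖ + γ * (2 * D * M ^ 2 + W) / (1 - ρ) := fun t => by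
    rw [← hxa0]
    exact hISS_noiseless.norm_le hβ.le hρ0.le hρ1 hγ.le hg0 (x := xa)
      (u := fun t => B t (Y t (tilα t)) + w t) (fun t => by rw [hxa, add_zero, add_assoc])
      (fun t => (norm_add_le _ _).trans (add_le_add (hu t) (hw t))) t
  have hxc_le : ∀ t, ‖xc t‖ ≤ β * ‖x0‖ + γ * (2 * D * M ^ 2 + W) / (1 - ρ) := fun t => by
    rw [← hxc0]
    exact hISS_noiseless.norm_le hβ.le hρ0.le hρ1 hγ.le hg0 (x := xc)
      (fun t => by rw [hxc, add_zero])
      (fun t => (hw t).trans (le_add_of_nonneg_left ((norm_nonneg _).trans (hu t)))) t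
  have hISS : IsExpIncrISS (fun x t => f x t + w t) β ρ γ := hiss w hw
  have hdiff := hISS.norm_sub_le_of_eq (fun t => by rw [hxa, add_right_comm]) hxc
    (hxa0.trans hxc0.symm)
  exact sum_sq_norm_sub_sq_norm_le hxa_le hxc_le hρ0.le hρ1 hγ.le (fun _ => norm_nonneg _) hdiff T

theorem stmt14 (n d p : ℕ) (β ρ γ W D M : ℝ)
    (hβ : 0 < β) (hρ0 : 0 < ρ) (hρ1 : ρ < 1) (hγ : 0 < γ)
    (hW : 0 ≤ W) (hD : 0 < D) (hM : 0 ≤ M)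
    (f : EuclideanSpace ℝ (Fin n) → ℕ → EuclideanSpace ℝ (Fin n))
    (hf0 : ∀ t, f 0 t = 0)
    -- the system f perturbed by any admissible noise sequence is (β,ρ,γ)-E-δISS
    (hiss : ∀ w : ℕ → EuclideanSpace ℝ (Fin n), (∀ t, ‖w t‖ ≤ W) →
      ∀ (xp yq u : ℕ → EuclideanSpace ℝ (Fin n)),
        (∀ t, xp (t + 1) = f (xp t) t + w t + u t) →
        (∀ t, yq (t + 1) = f (yq t) t + w t) →
        ∀ t, ‖xp t - yq t‖ ≤ β * ρ ^ t * ‖xp 0 - yq 0‖ +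
          γ * ∑ k ∈ Finset.range t, ρ ^ (t - 1 - k) * ‖u k‖)
    (w : ℕ → EuclideanSpace ℝ (Fin n)) (hw : ∀ t, ‖w t‖ ≤ W)
    (B : ℕ → (EuclideanSpace ℝ (Fin d) →L[ℝ] EuclideanSpace ℝ (Fin n)))
    (Y : ℕ → (EuclideanSpace ℝ (Fin p) →L[ℝ] EuclideanSpace ℝ (Fin d)))
    (tilα : ℕ → EuclideanSpace ℝ (Fin p))
    (hB : ∀ t, ‖B t‖ ≤ M) (hY : ∀ t, ‖Y t‖ ≤ M) (htil : ∀ t, ‖tilα t‖ ≤ 2 * D)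
    (x0 : EuclideanSpace ℝ (Fin n))
    (xa xc : ℕ → EuclideanSpace ℝ (Fin n)) (hxa0 : xa 0 = x0) (hxc0 : xc 0 = x0)
    (hxa : ∀ t, xa (t + 1) = f (xa t) t + (B t) ((Y t) (tilα t)) + w t)
    (hxc : ∀ t, xc (t + 1) = f (xc t) t + w t) :
    ∀ T : ℕ, 1 ≤ T →
      ∑ t ∈ Finset.range T, (‖xa t‖ ^ 2 - ‖xc t‖ ^ 2) ≤
        (2 * (β * ‖x0‖ + γ * (2 * D * M ^ 2 + W) / (1 - ρ)) * γ / (1 - ρ)) *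
          Real.sqrt T *
          Real.sqrt (∑ t ∈ Finset.range T, ‖(B t) ((Y t) (tilα t))‖ ^ 2) :=
  stmt14_general n d p β ρ γ W D M hβ hρ0 hρ1 hγ f hf0 hiss w hw B Y tilα hB hY htil x0 xa xc hxa0
    hxc0 hxa hxc
end

section
/- Let f : R^n -> R^n with f(0)=0, and suppose there is a function Q(x,t) satisfying mu*||x||^2 <= Q(x,t) <= L*||x||^2, Q(f(x,t), t+1) <= rho*Q(x,t) for some rho in (0,1), and x -> grad_x Q(x,t) is L_Q-Lipschitz for each t. Then the system is (sqrt(L/mu), sqrt(rho), L_Q/(2*mu))-exponentially input-to-state stable: for any x_0 and input u_t, the trajectory x_{t+1} = f(x_t,t) + u_t satisfies ||x_t|| <= sqrt(L/mu)*rho^{t/2}*||x_0|| + (L_Q/(2*mu))*sum_{k=0}^{t-1} rho^{(t-1-k)/2}*||u_k||. -/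
/-!
`V = √Q` is a Lyapunov function that is Lipschitz in `x` with constant `C = L_Q / (2 √μ)`: by the
descent lemma `Q y ≤ Q z + ⟪∇Q z, y - z⟫ + L_Q/2 ‖y - z‖²`, and since `0` minimises `Q` we have
`‖∇Q z‖ ≤ L_Q ‖z‖ ≤ 2 C √(Q z)`, so the right-hand side is at most `(√(Q z) + C ‖y - z‖)²`.
Hence `V(x_{t+1}) ≤ √ρ V(x_t) + C ‖u_t‖`; unrolling this recursion and using
`√μ ‖x‖ ≤ V x ≤ √L ‖x‖` gives the estimate.
-/

open scoped RealInnerProductSpace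

theorem Real.sqrt_mul_norm_sq {E : Type*} [SeminormedAddCommGroup E] (a : ℝ) (x : E) :
    √(a * ‖x‖ ^ 2) = √a * ‖x‖ := by
  rw [Real.sqrt_mul' a (by positivity), Real.sqrt_sq (norm_nonneg x)]

section GradientLipschitz

variable {F : Type*} [NormedAddCommGroup F] [InnerProductSpace ℝ F] [CompleteSpace F]
  {g : F → ℝ} {K : ℝ}

theorem IsLocalMin.gradient_eq_zero {a : F} (h : IsLocalMin g a) : gradient g a = 0 := by
  rw [gradient, h.fderiv_eq_zero, map_zero]

theorem Differentiable.hasDerivAt_comp_add_smul (hg : Differentiable ℝ g) (z v : F) (s : ℝ) :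
    HasDerivAt (fun s : ℝ => g (z + s • v)) (⟪gradient g (z + s • v), v⟫) s := by
  have hline : HasDerivAt (fun s : ℝ => z + s • v) v s := by
    simpa using ((hasDerivAt_id s).smul_const v).const_add z
  rw [inner_gradient_left]
  exact (hg _).hasFDerivAt.comp_hasDerivAt s hline

theorem descent_lemma (hg : Differentiable ℝ g)
    (hlip : ∀ a b, ‖gradient g a - gradient g b‖ ≤ K * ‖a - b‖) (z y : F) :
    g y ≤ g z + ⟪gradient g z, y - z⟫ + K / 2 * ‖y - z‖ ^ 2 := by
  set v := y - z
  have hbound : ∀ s ∈ Set.Ico (0 : ℝ) 1,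
      ⟪gradient g (z + s • v), v⟫ ≤ ⟪gradient g z, v⟫ + K * s * ‖v‖ ^ 2 := by
    rintro s ⟨hs, -⟩
    have hdist : ‖gradient g (z + s • v) - gradient g z‖ ≤ K * s * ‖v‖ := by
      simpa [norm_smul, abs_of_nonneg hs, mul_assoc] using hlip (z + s • v) z
    have := real_inner_le_norm (gradient g (z + s • v) - gradient g z) v
    rw [inner_sub_left] at this
    nlinarith [norm_nonneg v]
  have hB : ∀ s : ℝ, HasDerivAt
      (fun s => g z + s * ⟪gradient g z, v⟫ + K / 2 * ‖v‖ ^ 2 * s ^ 2)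
      (⟪gradient g z, v⟫ + K * s * ‖v‖ ^ 2) s := fun s => by
    have hlin : HasDerivAt (fun s : ℝ => s * ⟪gradient g z, v⟫) ⟪gradient g z, v⟫ s := by
      simpa using (hasDerivAt_id s).mul_const ⟪gradient g z, v⟫
    exact ((hlin.const_add (g z)).add
      ((hasDerivAt_pow 2 s).const_mul (K / 2 * ‖v‖ ^ 2))).congr_deriv (by ring)
  have key := image_le_of_deriv_right_le_deriv_boundary
    (fun s _ => (hg.hasDerivAt_comp_add_smul z v s).continuousAt.continuousWithinAt)
    (fun s _ => (hg.hasDerivAt_comp_add_smul z v s).hasDerivWithinAt)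
    (by simp) (fun s _ => (hB s).continuousAt.continuousWithinAt)
    (fun s _ => (hB s).hasDerivWithinAt) hbound (Set.right_mem_Icc.2 zero_le_one)
  simpa [v] using key

theorem sqrt_le_sqrt_add_of_lipschitz_gradient {μ : ℝ} (hμ : 0 < μ) (hg : Differentiable ℝ g)
    (hlip : ∀ a b, ‖gradient g a - gradient g b‖ ≤ K * ‖a - b‖)
    (hlow : ∀ x, μ * ‖x‖ ^ 2 ≤ g x) (hg0 : g 0 = 0) (z y : F) :
    √(g y) ≤ √(g z) + K / (2 * √μ) * ‖y - z‖ := by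
  rcases eq_or_ne y z with rfl | hyz
  · simp
  have hgrad0 : gradient g 0 = 0 :=
    IsLocalMin.gradient_eq_zero (Filter.Eventually.of_forall fun x =>
      hg0 ▸ (by positivity : 0 ≤ μ * ‖x‖ ^ 2).trans (hlow x))
  -- Needed to absorb the curvature term `K / 2 ‖y - z‖²` of the descent lemma into `C² ‖y - z‖²`;
  -- it follows from the descent lemma at `0` in the direction `y - z ≠ 0`.
  have hμK : 2 * μ ≤ K := by
    have hpos : 0 < ‖y - z‖ ^ 2 := pow_pos (norm_pos_iff.2 (sub_ne_zero.2 hyz)) 2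
    have := (hlow (y - z)).trans (descent_lemma hg hlip 0 (y - z))
    simp only [hg0, hgrad0, inner_zero_left, sub_zero, zero_add] at this
    nlinarith
  set C := K / (2 * √μ)
  have hsμ : 0 < √μ := Real.sqrt_pos.2 hμ
  have hC0 : 0 ≤ C := div_nonneg (by linarith) (by positivity)
  have hz : √μ * ‖z‖ ≤ √(g z) := Real.sqrt_mul_norm_sq μ z ▸ Real.sqrt_le_sqrt (hlow z)
  have hgrad : ⟪gradient g z, y - z⟫ ≤ 2 * C * √(g z) * ‖y - z‖ := by
    have hgz : ‖gradient g z‖ ≤ K * ‖z‖ := by simpa [hgrad0] using hlip z 0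
    have hKz : K * ‖z‖ ≤ 2 * C * √(g z) := by
      calc K * ‖z‖ = 2 * C * (√μ * ‖z‖) := by simp only [C]; field_simp
        _ ≤ 2 * C * √(g z) := by gcongr
    exact (real_inner_le_norm _ _).trans (by gcongr; exact hgz.trans hKz)
  have hC : K / 2 ≤ C ^ 2 := by
    rw [div_pow, mul_pow, Real.sq_sqrt hμ.le, le_div_iff₀ (by positivity)]
    nlinarith
  rw [Real.sqrt_le_iff]
  refine ⟨by positivity, ?_⟩
  have hsq := Real.sq_sqrt ((by positivity : 0 ≤ μ * ‖z‖ ^ 2).trans (hlow z))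
  nlinarith [descent_lemma hg hlip z y, mul_le_mul_of_nonneg_right hC (sq_nonneg ‖y - z‖)]

end GradientLipschitz

theorem le_pow_mul_add_sum_of_le_mul_add {w b : ℕ → ℝ} {a : ℝ} (ha : 0 ≤ a)
    (h : ∀ t, w (t + 1) ≤ a * w t + b t) (t : ℕ) :
    w t ≤ a ^ t * w 0 + ∑ k ∈ Finset.range t, a ^ (t - 1 - k) * b k := by
  induction t with
  | zero => simp
  | succ t ih =>
    have hsum : ∑ k ∈ Finset.range (t + 1), a ^ (t + 1 - 1 - k) * b k
        = a * ∑ k ∈ Finset.range t, a ^ (t - 1 - k) * b k + b t := by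
      rw [Finset.sum_range_succ, Finset.mul_sum, Nat.add_sub_cancel, Nat.sub_self, pow_zero,
        one_mul]
      congr 1
      refine Finset.sum_congr rfl fun k hk => ?_
      rw [← mul_assoc, ← pow_succ']
      have := Finset.mem_range.1 hk
      congr 2
      omega
    rw [hsum]
    calc w (t + 1) ≤ a * w t + b t := h t
      _ ≤ a * (a ^ t * w 0 + ∑ k ∈ Finset.range t, a ^ (t - 1 - k) * b k) + b t := by gcongr
      _ = _ := by ring

theorem stmt15_general (n : ℕ) (μ L LQ ρ : ℝ)
    (hμ : 0 < μ)
    (f : EuclideanSpace ℝ (Fin n) → ℕ → EuclideanSpace ℝ (Fin n))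
    (Q : EuclideanSpace ℝ (Fin n) → ℕ → ℝ)
    (hQdiff : ∀ t, Differentiable ℝ (fun z => Q z t))
    (hQlow : ∀ x t, μ * ‖x‖ ^ 2 ≤ Q x t)
    (hQupp : ∀ x t, Q x t ≤ L * ‖x‖ ^ 2)
    (hdec : ∀ x t, Q (f x t) (t + 1) ≤ ρ * Q x t)
    (hgradLip : ∀ t, ∀ x y : EuclideanSpace ℝ (Fin n),
      ‖gradient (fun z => Q z t) x - gradient (fun z => Q z t) y‖ ≤ LQ * ‖x - y‖)
    (x u : ℕ → EuclideanSpace ℝ (Fin n))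
    (hx : ∀ t, x (t + 1) = f (x t) t + u t) :
    ∀ t, ‖x t‖ ≤ Real.sqrt (L / μ) * Real.sqrt ρ ^ t * ‖x 0‖ +
      (LQ / (2 * μ)) * ∑ k ∈ Finset.range t, Real.sqrt ρ ^ (t - 1 - k) * ‖u k‖ := by
  intro t
  have hQ0 (s : ℕ) : Q 0 s = 0 :=
    le_antisymm (by simpa using hQupp 0 s) (by simpa using hQlow 0 s)
  have hstep (s : ℕ) :
      √(Q (x (s + 1)) (s + 1)) ≤ √ρ * √(Q (x s) s) + LQ / (2 * √μ) * ‖u s‖ := by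
    calc √(Q (x (s + 1)) (s + 1))
        ≤ √(Q (f (x s) s) (s + 1)) + LQ / (2 * √μ) * ‖x (s + 1) - f (x s) s‖ :=
          sqrt_le_sqrt_add_of_lipschitz_gradient hμ (hQdiff _) (hgradLip _)
            (fun y => hQlow y _) (hQ0 _) _ _
      _ ≤ √(ρ * Q (x s) s) + LQ / (2 * √μ) * ‖u s‖ := by
          rw [hx, add_sub_cancel_left]
          gcongr
          exact hdec _ _
      _ = √ρ * √(Q (x s) s) + LQ / (2 * √μ) * ‖u s‖ := by
          rw [Real.sqrt_mul' ρ ((by positivity : 0 ≤ μ * ‖x s‖ ^ 2).trans (hQlow _ _))]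
  have hsμ : 0 < √μ := Real.sqrt_pos.2 hμ
  refine le_of_mul_le_mul_left ?_ hsμ
  calc √μ * ‖x t‖ ≤ √(Q (x t) t) := by
        rw [← Real.sqrt_mul_norm_sq]
        exact Real.sqrt_le_sqrt (hQlow _ _)
    _ ≤ √ρ ^ t * √(Q (x 0) 0) +
          ∑ k ∈ Finset.range t, √ρ ^ (t - 1 - k) * (LQ / (2 * √μ) * ‖u k‖) :=
        le_pow_mul_add_sum_of_le_mul_add (w := fun s => √(Q (x s) s)) (Real.sqrt_nonneg ρ) hstep t
    _ ≤ √ρ ^ t * (√L * ‖x 0‖) +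
          ∑ k ∈ Finset.range t, √ρ ^ (t - 1 - k) * (LQ / (2 * √μ) * ‖u k‖) := by
        gcongr
        rw [← Real.sqrt_mul_norm_sq]
        exact Real.sqrt_le_sqrt (hQupp _ _)
    _ = √μ * (√(L / μ) * √ρ ^ t * ‖x 0‖ +
          LQ / (2 * μ) * ∑ k ∈ Finset.range t, √ρ ^ (t - 1 - k) * ‖u k‖) := by
        have hC : √μ * (LQ / (2 * μ)) = LQ / (2 * √μ) := by
          field_simp
          rw [Real.sq_sqrt hμ.le, mul_comm]
        rw [Real.sqrt_div' L hμ.le, mul_add, ← mul_assoc √μ (LQ / (2 * μ)), hC, Finset.mul_sum]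
        congr 1
        · field_simp
        · exact Finset.sum_congr rfl fun k _ => by ring

theorem stmt15 (n : ℕ) (μ L LQ ρ : ℝ)
    (hμ : 0 < μ) (hL : 0 < L) (hLQ : 0 < LQ) (hρ0 : 0 < ρ) (hρ1 : ρ < 1)
    (f : EuclideanSpace ℝ (Fin n) → ℕ → EuclideanSpace ℝ (Fin n))
    (hf0 : ∀ t, f 0 t = 0)
    (Q : EuclideanSpace ℝ (Fin n) → ℕ → ℝ)
    (hQdiff : ∀ t, Differentiable ℝ (fun z => Q z t))
    (hQlow : ∀ x t, μ * ‖x‖ ^ 2 ≤ Q x t)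
    (hQupp : ∀ x t, Q x t ≤ L * ‖x‖ ^ 2)
    (hdec : ∀ x t, Q (f x t) (t + 1) ≤ ρ * Q x t)
    (hgradLip : ∀ t, ∀ x y : EuclideanSpace ℝ (Fin n),
      ‖gradient (fun z => Q z t) x - gradient (fun z => Q z t) y‖ ≤ LQ * ‖x - y‖)
    (x u : ℕ → EuclideanSpace ℝ (Fin n))
    (hx : ∀ t, x (t + 1) = f (x t) t + u t) :
    ∀ t, ‖x t‖ ≤ Real.sqrt (L / μ) * Real.sqrt ρ ^ t * ‖x 0‖ +
      (LQ / (2 * μ)) * ∑ k ∈ Finset.range t, Real.sqrt ρ ^ (t - 1 - k) * ‖u k‖ :=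
  stmt15_general n μ L LQ ρ hμ f Q hQdiff hQlow hQupp hdec hgradLip x u hx
end

section
/- Suppose R(x, a, t) >= 0 is convex in a for all x,t, mu(t) >= 0 satisfies int_0^infty mu(t) dt < infty, and there exists alpha with R(x, alpha, t) <= mu(t) for all x,t. If hat_alpha(t) evolves by the gradient flow d/dt hat_alpha = -grad_a R(x(t), hat_alpha(t), t), then for any t in the maximal interval of existence: int_0^t R(x(s), hat_alpha(s), s) ds <= (1/2)*||hat_alpha(0) - alpha||^2 + int_0^infty mu(s) ds. -/
open MeasureTheory

local notation "⟪" x ", " y "⟫" => @inner ℝ _ _ x y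

lemma grad_convex_ineq {p : ℕ} (f : EuclideanSpace ℝ (Fin p) → ℝ)
    (hc : ConvexOn ℝ Set.univ f) (hd : Differentiable ℝ f)
    (a b : EuclideanSpace ℝ (Fin p)) :
    f a + ⟪gradient f a, b - a⟫ ≤ f b := by
  set g : ℝ → ℝ := fun τ => f (a + τ • (b - a)) with hgdef
  have hgc : ConvexOn ℝ Set.univ g := by
    have h := hc.comp_affineMap (AffineMap.lineMap a b : ℝ →ᵃ[ℝ] EuclideanSpace ℝ (Fin p))
    have : (AffineMap.lineMap a b : ℝ →ᵃ[ℝ] EuclideanSpace ℝ (Fin p)) ⁻¹' Set.univ = Set.univ := by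
      simp
    rw [this] at h
    convert h using 1
    rotate_right
    funext τ
    simp [hgdef, Function.comp, AffineMap.lineMap_apply]
    abel_nf
    all_goals rfl
  have hpath : HasDerivAt (fun τ : ℝ => a + τ • (b - a)) (b - a) 0 := by
    simpa using ((hasDerivAt_id (0 : ℝ)).smul_const (b - a)).const_add a
  have hgrad : HasGradientAt f (gradient f a) a := (hd a).hasGradientAt
  have hF : HasFDerivAt f (InnerProductSpace.toDual ℝ _ (gradient f a)) a :=
    (hasGradientAt_iff_hasFDerivAt).mp hgrad
  have hF' : HasFDerivAt f (InnerProductSpace.toDual ℝ _ (gradient f a))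
      ((fun τ : ℝ => a + τ • (b - a)) 0) := by simpa using hF
  have hgder : HasDerivAt g ⟪gradient f a, b - a⟫ 0 := by
    have h2 := hF'.comp_hasDerivAt 0 hpath
    simp only [InnerProductSpace.toDual_apply_apply] at h2
    exact h2
  have hslope := hgc.le_slope_of_hasDerivAt (Set.mem_univ 0) (Set.mem_univ 1)
    one_pos hgder
  have hs : slope g 0 1 = f b - f a := by
    simp [slope_def_field, hgdef]
  rw [hs] at hslope
  linarith

theorem stmt17 (nx pa : ℕ)
    (R : EuclideanSpace ℝ (Fin nx) → EuclideanSpace ℝ (Fin pa) → ℝ → ℝ)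
    (hR0 : ∀ x a t, 0 ≤ R x a t)
    (hconv : ∀ x t, ConvexOn ℝ Set.univ (fun a => R x a t))
    (hRdiff : ∀ x t, Differentiable ℝ (fun a => R x a t))
    (μ : ℝ → ℝ) (hμ0 : ∀ t, 0 ≤ μ t) (hμint : IntegrableOn μ (Set.Ici 0))
    (αstar : EuclideanSpace ℝ (Fin pa)) (hstar : ∀ x t, R x αstar t ≤ μ t)
    (x : ℝ → EuclideanSpace ℝ (Fin nx))
    (hatα : ℝ → EuclideanSpace ℝ (Fin pa))
    (t : ℝ) (ht : 0 ≤ t)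
    (hflow : ∀ s ∈ Set.Icc (0 : ℝ) t,
      HasDerivAt hatα (-(gradient (fun a => R (x s) a s) (hatα s))) s) :
    ∫ s in (0 : ℝ)..t, R (x s) (hatα s) s ≤
      (1 / 2) * ‖hatα 0 - αstar‖ ^ 2 + ∫ s in Set.Ici (0 : ℝ), μ s := by
  have hμIci : 0 ≤ ∫ s in Set.Ici (0 : ℝ), μ s :=
    setIntegral_nonneg measurableSet_Ici (fun s _ => hμ0 s)
  by_cases hg : IntervalIntegrable (fun s => R (x s) (hatα s) s) volume 0 t
  · -- main case
    set W : ℝ → ℝ := fun s => (1 / 2 : ℝ) * ⟪hatα s - αstar, hatα s - αstar⟫ with hWdef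
    set W' : ℝ → ℝ := fun s =>
      ⟪hatα s - αstar, -(gradient (fun a => R (x s) a s) (hatα s))⟫ with hW'def
    have hW : ∀ s ∈ Set.Icc (0 : ℝ) t, HasDerivAt W (W' s) s := by
      intro s hs
      have hsub : HasDerivAt (fun u => hatα u - αstar)
          (-(gradient (fun a => R (x s) a s) (hatα s))) s := (hflow s hs).sub_const αstar
      have hin := hsub.inner ℝ hsub
      have := hin.const_mul (1 / 2 : ℝ)
      convert this using 1
      rotate_right
      rw [hW'def]
      simp only [real_inner_comm (hatα s - αstar)]
      ring
      all_goals rfl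
    have hcontW : ContinuousOn W (Set.Icc 0 t) := fun s hs =>
      ((hW s hs).continuousAt).continuousWithinAt
    have hμII : IntervalIntegrable μ volume 0 t := by
      have h1 : IntegrableOn μ (Set.uIcc 0 t) := hμint.mono_set
        (by rw [Set.uIcc_of_le ht]; intro u hu; exact hu.1)
      exact h1.intervalIntegrable
    have φint : IntegrableOn (fun s => μ s - R (x s) (hatα s) s) (Set.Icc 0 t) := by
      have h1 : IntegrableOn μ (Set.Icc 0 t) :=
        hμint.mono_set (fun u hu => (Set.mem_Icc.mp hu).1)
      have h2 : IntegrableOn (fun s => R (x s) (hatα s) s) (Set.Icc 0 t) :=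
        (intervalIntegrable_iff_integrableOn_Icc_of_le ht).mp hg
      exact h1.sub h2
    have hφg : ∀ s ∈ Set.Ioo (0 : ℝ) t, W' s ≤ μ s - R (x s) (hatα s) s := by
      intro s hs
      have hgi := grad_convex_ineq (fun a => R (x s) a s) (hconv (x s) s) (hRdiff (x s) s)
        (hatα s) αstar
      have heq : W' s = ⟪gradient (fun a => R (x s) a s) (hatα s), αstar - hatα s⟫ := by
        rw [hW'def]
        show ⟪hatα s - αstar, -(gradient (fun a => R (x s) a s) (hatα s))⟫ = _
        rw [inner_neg_right, real_inner_comm, ← inner_neg_right]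
        congr 1
        abel
      have hμs := hstar (x s) s
      rw [heq]
      linarith
    have key := intervalIntegral.sub_le_integral_of_hasDeriv_right_of_le ht hcontW
      (fun s hs => (hW s (Set.mem_Icc_of_Ioo hs)).hasDerivWithinAt) φint hφg
    have hsplit : (∫ s in (0:ℝ)..t, (μ s - R (x s) (hatα s) s)) =
        (∫ s in (0:ℝ)..t, μ s) - ∫ s in (0:ℝ)..t, R (x s) (hatα s) s :=
      intervalIntegral.integral_sub hμII hg
    have hWt : 0 ≤ W t := by
      rw [hWdef]
      have := real_inner_self_nonneg (x := hatα t - αstar)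
      positivity
    have hW0 : W 0 = (1 / 2) * ‖hatα 0 - αstar‖ ^ 2 := by
      show (1/2 : ℝ) * ⟪hatα 0 - αstar, hatα 0 - αstar⟫ = _
      rw [real_inner_self_eq_norm_sq]
    have hμtail : (∫ s in (0:ℝ)..t, μ s) ≤ ∫ s in Set.Ici (0:ℝ), μ s := by
      rw [intervalIntegral.integral_of_le ht]
      apply setIntegral_mono_set hμint
      · exact Filter.Eventually.of_forall (fun s => hμ0 s)
      · exact Filter.Eventually.of_forall (fun s hs => le_of_lt (Set.mem_Ioc.mp hs).1)
    rw [hsplit] at key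
    linarith
  · rw [intervalIntegral.integral_undef hg]
    positivity
end

section
/- In the statistical model y_t = M_t alpha_* + w_t with V_t = sum_{k=1}^t M_k^T M_k + lambda*I, suppose the self-normalized bound ||sum_{k=1}^t M_k^T w_k||^2_{V_t^{-1}} <= 2*sigma^2 * log((1/delta) * det(V_t)^{1/2}/det(lambda*I)^{1/2}) holds, that ||M_t|| <= M for all t, and that the persistence of excitation condition (1/t) sum_{k=1}^t M_k^T M_k >= mu*I holds for all t >= T_0. Then the projected regularized least-squares estimator hat_alpha_t = Pi_C[V_t^{-1} sum_{k=1}^t M_k^T y_k] (with alpha_* in the convex set C) satisfies, for all t >= T_0: ||hat_alpha_t - alpha_*|| <= (sigma/sqrt(lambda + mu*t)) * sqrt(3*p*log((1/delta)*(1 + t*M^2/lambda))) + (lambda/(lambda + mu*t))*||alpha_*||. -/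
/-!
Write `V = λ I + G` with `G = ∑ Mₖᵀ Mₖ` and `S = ∑ Mₖᵀ wₖ`. Since `G α⋆ = V α⋆ - λ α⋆`, the
unprojected estimate satisfies `V⁻¹ ∑ Mₖᵀ yₖ - α⋆ = V⁻¹ S - λ V⁻¹ α⋆`, and the projection onto `C`
does not increase the distance to `α⋆ ∈ C`. Persistence of excitation gives `V ⪰ (λ + μ t) I`,
so `‖V⁻¹ α⋆‖ ≤ ‖α⋆‖ / (λ + μ t)` and `(λ + μ t) ‖V⁻¹ S‖² ≤ ⟪S, V⁻¹ S⟫`, which the self-normalized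
bound controls. Finally `‖Mₖ‖ ≤ M` gives `V ⪯ (λ + t M²) I`, hence `det V ≤ (λ + t M²)ᵖ`, and
the logarithm of the determinant ratio is at most `(p / 2) log (1 + t M² / λ)`; for `p ≥ 1` and
`δ ≤ 1` the remaining `log (1 / δ)` is absorbed into the factor `3 p`.
-/

local notation "⟪" x ", " y "⟫" => @inner ℝ _ _ x y

open Finset ContinuousLinearMap

namespace LinearMap.IsSymmetric

variable {E : Type*} [NormedAddCommGroup E] [InnerProductSpace ℝ E] [FiniteDimensional ℝ E]
  {T : E →ₗ[ℝ] E} {n : ℕ} {a b : ℝ}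

lemma eigenvalues_eq_inner (hT : T.IsSymmetric) (hn : Module.finrank ℝ E = n) (i : Fin n) :
    hT.eigenvalues hn i = ⟪hT.eigenvectorBasis hn i, T (hT.eigenvectorBasis hn i)⟫ := by
  rw [hT.apply_eigenvectorBasis, real_inner_smul_right, real_inner_self_eq_norm_sq,
    (hT.eigenvectorBasis hn).orthonormal.1 i]
  simp

lemma le_eigenvalues (hT : T.IsSymmetric) (hn : Module.finrank ℝ E = n)
    (hlow : ∀ v, a * ‖v‖ ^ 2 ≤ ⟪v, T v⟫) (i : Fin n) : a ≤ hT.eigenvalues hn i := by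
  have h := hlow (hT.eigenvectorBasis hn i)
  rwa [(hT.eigenvectorBasis hn).orthonormal.1 i, ← hT.eigenvalues_eq_inner, one_pow,
    mul_one] at h

lemma eigenvalues_le (hT : T.IsSymmetric) (hn : Module.finrank ℝ E = n)
    (hup : ∀ v, ⟪v, T v⟫ ≤ b * ‖v‖ ^ 2) (i : Fin n) : hT.eigenvalues hn i ≤ b := by
  have h := hup (hT.eigenvectorBasis hn i)
  rwa [(hT.eigenvectorBasis hn).orthonormal.1 i, ← hT.eigenvalues_eq_inner, one_pow,
    mul_one] at h

lemma pow_finrank_le_det (hT : T.IsSymmetric) (ha : 0 ≤ a)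
    (hlow : ∀ v, a * ‖v‖ ^ 2 ≤ ⟪v, T v⟫) : a ^ Module.finrank ℝ E ≤ T.det :=
  calc a ^ Module.finrank ℝ E = ∏ _i : Fin (Module.finrank ℝ E), a := by simp
    _ ≤ ∏ i, hT.eigenvalues rfl i :=
      prod_le_prod (fun _ _ => ha) fun i _ => hT.le_eigenvalues rfl hlow i
    _ = T.det := by simp [hT.det_eq_prod_eigenvalues rfl]

lemma det_le_pow_finrank (hT : T.IsSymmetric) (ha : 0 ≤ a)
    (hlow : ∀ v, a * ‖v‖ ^ 2 ≤ ⟪v, T v⟫) (hup : ∀ v, ⟪v, T v⟫ ≤ b * ‖v‖ ^ 2) :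
    T.det ≤ b ^ Module.finrank ℝ E :=
  calc T.det = ∏ i, hT.eigenvalues rfl i := by simp [hT.det_eq_prod_eigenvalues rfl]
    _ ≤ ∏ _i : Fin (Module.finrank ℝ E), b :=
      prod_le_prod (fun i _ => ha.trans (hT.le_eigenvalues rfl hlow i))
        fun i _ => hT.eigenvalues_le rfl hup i
    _ = b ^ Module.finrank ℝ E := by simp

end LinearMap.IsSymmetric

lemma two_mul_log_le_three_mul_log {δ a b D : ℝ} {p : ℕ} (hδ : 0 < δ) (hδ1 : δ ≤ 1)
    (ha : 0 < a) (hb : 1 ≤ b) (hp : 1 ≤ p) (hD : 0 < D) (hDle : D ≤ (a * b) ^ p) :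
    2 * Real.log (1 / δ * √D / √(a ^ p)) ≤ 3 * p * Real.log (1 / δ * b) := by
  have hap : 0 < a ^ p := by positivity
  have hδlog : 0 ≤ Real.log (1 / δ) := Real.log_nonneg (by rw [le_div_iff₀ hδ]; linarith)
  have hblog : 0 ≤ Real.log b := Real.log_nonneg hb
  have hratio : 1 / δ * √D / √(a ^ p) ≤ 1 / δ * √(b ^ p) := by
    rw [mul_div_assoc, ← Real.sqrt_div' _ hap.le]
    gcongr
    rwa [div_le_iff₀ hap, ← mul_pow, mul_comm b]
  have hlog := Real.log_le_log (by positivity) hratio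
  rw [Real.log_mul (by positivity) (by positivity), Real.log_sqrt (by positivity),
    Real.log_pow] at hlog
  rw [Real.log_mul (by positivity) (by positivity)]
  have hp' : (1 : ℝ) ≤ p := by exact_mod_cast hp
  nlinarith

lemma LinearMap.IsSymmetric.two_mul_log_det_le {E : Type*} [NormedAddCommGroup E]
    [InnerProductSpace ℝ E] [FiniteDimensional ℝ E] {T : E →ₗ[ℝ] E} (hT : T.IsSymmetric)
    {p : ℕ} (hn : Module.finrank ℝ E = p) (hp : 1 ≤ p) {δ c lam K : ℝ} (hδ : 0 < δ)
    (hδ1 : δ ≤ 1) (hc : 0 < c) (hlam : 0 < lam) (hK : 0 ≤ K)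
    (hlow : ∀ v, c * ‖v‖ ^ 2 ≤ ⟪v, T v⟫) (hup : ∀ v, ⟪v, T v⟫ ≤ (lam + K) * ‖v‖ ^ 2) :
    2 * Real.log (1 / δ * √T.det / √(lam ^ p)) ≤ 3 * p * Real.log (1 / δ * (1 + K / lam)) := by
  subst hn
  refine two_mul_log_le_three_mul_log hδ hδ1 hlam (le_add_of_nonneg_right (by positivity)) hp
    ((pow_pos hc _).trans_le (hT.pow_finrank_le_det hc.le hlow)) ?_
  rw [mul_one_add, mul_div_cancel₀ _ hlam.ne']
  exact hT.det_le_pow_finrank hc.le hlow hup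

section Inverse

variable {E : Type*} [NormedAddCommGroup E] [InnerProductSpace ℝ E] {V W : E →L[ℝ] E} {c : ℝ}

lemma inner_smul_one_add_apply_self (T : E →L[ℝ] E) (v : E) :
    ⟪v, (c • (1 : E →L[ℝ] E) + T) v⟫ = c * ‖v‖ ^ 2 + ⟪v, T v⟫ := by
  simp [inner_add_right, real_inner_smul_right]

lemma mul_norm_sq_le_inner_of_comp_eq_one (hV : ∀ v, c * ‖v‖ ^ 2 ≤ ⟪v, V v⟫)
    (hVW : V ∘L W = 1) (x : E) : c * ‖W x‖ ^ 2 ≤ ⟪x, W x⟫ := by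
  simpa [real_inner_comm, ← comp_apply, hVW] using hV (W x)

lemma norm_apply_le_div_of_comp_eq_one (hc : 0 < c) (hV : ∀ v, c * ‖v‖ ^ 2 ≤ ⟪v, V v⟫)
    (hVW : V ∘L W = 1) (x : E) : ‖W x‖ ≤ ‖x‖ / c := by
  rw [le_div_iff₀ hc]
  have h := (mul_norm_sq_le_inner_of_comp_eq_one hV hVW x).trans (real_inner_le_norm x (W x))
  rcases (norm_nonneg (W x)).eq_or_lt with h0 | h0
  · rw [← h0, zero_mul]
    exact norm_nonneg x
  · nlinarith

lemma norm_apply_le_of_inner_apply_le {σ K : ℝ} (hc : 0 < c) (hσ : 0 ≤ σ)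
    (hV : ∀ v, c * ‖v‖ ^ 2 ≤ ⟪v, V v⟫) (hVW : V ∘L W = 1) {x : E}
    (hx : ⟪x, W x⟫ ≤ σ ^ 2 * K) : ‖W x‖ ≤ σ / √c * √K :=
  calc ‖W x‖ = √(‖W x‖ ^ 2) := (Real.sqrt_sq (norm_nonneg _)).symm
    _ ≤ √(σ ^ 2 * K / c) := by
      gcongr
      rw [le_div_iff₀' hc]
      exact (mul_norm_sq_le_inner_of_comp_eq_one hV hVW x).trans hx
    _ = σ / √c * √K := by
      rw [Real.sqrt_div' _ hc.le, Real.sqrt_mul (sq_nonneg σ), Real.sqrt_sq hσ]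
      ring

end Inverse

section Gram

variable {ι E F : Type*} [NormedAddCommGroup E] [InnerProductSpace ℝ E] [CompleteSpace E]
  [NormedAddCommGroup F] [InnerProductSpace ℝ F] [CompleteSpace F]
  (A : ι → E →L[ℝ] F) (s : Finset ι)

lemma inner_sum_adjoint_comp_self_apply (v : E) :
    ⟪v, (∑ k ∈ s, adjoint (A k) ∘L A k) v⟫ = ∑ k ∈ s, ‖A k v‖ ^ 2 := by
  simp [inner_sum, adjoint_inner_right]

lemma inner_sum_adjoint_comp_self_le {M : ℝ} (hA : ∀ k ∈ s, ‖A k‖ ≤ M) (v : E) :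
    ⟪v, (∑ k ∈ s, adjoint (A k) ∘L A k) v⟫ ≤ #s * M ^ 2 * ‖v‖ ^ 2 := by
  rw [inner_sum_adjoint_comp_self_apply]
  calc ∑ k ∈ s, ‖A k v‖ ^ 2 ≤ ∑ _k ∈ s, (M * ‖v‖) ^ 2 :=
        sum_le_sum fun k hk => pow_le_pow_left₀ (norm_nonneg _)
          ((A k).le_of_opNorm_le (hA k hk) v) 2
    _ = #s * M ^ 2 * ‖v‖ ^ 2 := by simp [mul_pow, mul_assoc]

lemma isPositive_smul_one_add_sum_adjoint_comp_self {c : ℝ} (hc : 0 ≤ c) :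
    (c • (1 : E →L[ℝ] E) + ∑ k ∈ s, adjoint (A k) ∘L A k).IsPositive :=
  (isPositive_one.smul_of_nonneg hc).add
    (isPositive_sum s fun k _ => isPositive_adjoint_comp_self (A k))

variable {A s}

lemma comp_sum_adjoint_sub_eq {c : ℝ} {W : E →L[ℝ] E}
    (hW : W ∘L (c • 1 + ∑ k ∈ s, adjoint (A k) ∘L A k) = 1) (α : E) (w : ι → F) :
    W (∑ k ∈ s, adjoint (A k) (A k α + w k)) - α =
      W (∑ k ∈ s, adjoint (A k) (w k)) - c • W α := by
  have hα : W ((c • 1 + ∑ k ∈ s, adjoint (A k) ∘L A k) α) = α := by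
    rw [← comp_apply, hW, one_apply_eq_self]
  have hsum : ∑ k ∈ s, adjoint (A k) (A k α + w k) =
      (c • 1 + ∑ k ∈ s, adjoint (A k) ∘L A k) α - c • α + ∑ k ∈ s, adjoint (A k) (w k) := by
    simp [sum_add_distrib]
  rw [hsum, map_add, map_sub, hα, map_smul]
  abel

end Gram

theorem stmt19_general (n p T0 : ℕ) (hT0 : 1 ≤ T0) (lamda sigma M mu delta : ℝ)
    (hlam : 0 < lamda) (hsig : 0 < sigma) (hmu : 0 < mu)
    (hdel : 0 < delta) (hdel1 : delta < 1)
    (Mk : ℕ → (EuclideanSpace ℝ (Fin p) →L[ℝ] EuclideanSpace ℝ (Fin n)))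
    (hM : ∀ t, ‖Mk t‖ ≤ M)
    (w : ℕ → EuclideanSpace ℝ (Fin n)) (αstar : EuclideanSpace ℝ (Fin p))
    (C : Set (EuclideanSpace ℝ (Fin p))) (hstarC : αstar ∈ C)
    (projC : EuclideanSpace ℝ (Fin p) → EuclideanSpace ℝ (Fin p))
    (hpne : ∀ z, ∀ c ∈ C, ‖projC z - c‖ ≤ ‖z - c‖)
    (V Vinv : ℕ → (EuclideanSpace ℝ (Fin p) →L[ℝ] EuclideanSpace ℝ (Fin p)))
    (hV : ∀ t, V t =
      lamda • (1 : EuclideanSpace ℝ (Fin p) →L[ℝ] EuclideanSpace ℝ (Fin p)) +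
        ∑ k ∈ Finset.Icc 1 t, (ContinuousLinearMap.adjoint (Mk k)).comp (Mk k))
    (hVinv : ∀ t, (V t).comp (Vinv t) = 1 ∧ (Vinv t).comp (V t) = 1)
    -- persistence of excitation: (1/t) ∑_{k=1}^t Mkᵀ Mk ⪰ mu I for t ≥ T0
    (hPE : ∀ t, T0 ≤ t → ∀ v : EuclideanSpace ℝ (Fin p),
      mu * t * ‖v‖ ^ 2 ≤
        ⟪v, (∑ k ∈ Finset.Icc 1 t, (ContinuousLinearMap.adjoint (Mk k)).comp (Mk k)) v⟫)
    -- the self-normalized martingale bound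
    (hself : ∀ t : ℕ, 1 ≤ t →
      ⟪∑ k ∈ Finset.Icc 1 t, (ContinuousLinearMap.adjoint (Mk k)) (w k),
          (Vinv t) (∑ k ∈ Finset.Icc 1 t, (ContinuousLinearMap.adjoint (Mk k)) (w k))⟫ ≤
        2 * sigma ^ 2 * Real.log ((1 / delta) *
          Real.sqrt (LinearMap.det (V t).toLinearMap) / Real.sqrt (lamda ^ p)))
    (hatα : ℕ → EuclideanSpace ℝ (Fin p))
    (hhat : ∀ t, hatα t = projC ((Vinv t)
      (∑ k ∈ Finset.Icc 1 t, (ContinuousLinearMap.adjoint (Mk k)) ((Mk k) αstar + w k)))) :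
    ∀ t : ℕ, T0 ≤ t →
      ‖hatα t - αstar‖ ≤
        sigma / Real.sqrt (lamda + mu * t) *
            Real.sqrt (3 * p * Real.log ((1 / delta) * (1 + t * M ^ 2 / lamda))) +
          lamda / (lamda + mu * t) * ‖αstar‖ := by
  intro t ht
  obtain rfl | hp := p.eq_zero_or_pos
  · simp [Subsingleton.elim (hatα t) αstar, Subsingleton.elim αstar 0]
  have hc : 0 < lamda + mu * t := by positivity
  have hlow : ∀ v, (lamda + mu * t) * ‖v‖ ^ 2 ≤ ⟪v, V t v⟫ := fun v => by
    rw [hV t, inner_smul_one_add_apply_self]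
    linarith [hPE t ht v]
  have hup : ∀ v, ⟪v, V t v⟫ ≤ (lamda + t * M ^ 2) * ‖v‖ ^ 2 := fun v => by
    have h := inner_sum_adjoint_comp_self_le Mk (Icc 1 t) (fun k _ => hM k) v
    rw [Nat.card_Icc, Nat.add_sub_cancel] at h
    rw [hV t, inner_smul_one_add_apply_self]
    linarith
  have hsymm : (V t).toLinearMap.IsSymmetric := by
    rw [hV t]
    exact (isPositive_smul_one_add_sum_adjoint_comp_self Mk _ hlam.le).isSymmetric
  have hlog := hsymm.two_mul_log_det_le finrank_euclideanSpace_fin hp hdel hdel1.le hc hlam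
    (by positivity) hlow hup
  set S := ∑ k ∈ Icc 1 t, adjoint (Mk k) (w k)
  have hnoise : ‖Vinv t S‖ ≤ sigma / √(lamda + mu * t) *
      √(3 * p * Real.log (1 / delta * (1 + t * M ^ 2 / lamda))) :=
    norm_apply_le_of_inner_apply_le hc hsig.le hlow (hVinv t).1
      (by linarith [hself t (hT0.trans ht), mul_le_mul_of_nonneg_left hlog (sq_nonneg sigma)])
  have hbias : lamda * ‖Vinv t αstar‖ ≤ lamda / (lamda + mu * t) * ‖αstar‖ := by
    rw [div_mul_eq_mul_div, mul_div_assoc]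
    exact mul_le_mul_of_nonneg_left (norm_apply_le_div_of_comp_eq_one hc hlow (hVinv t).1 _)
      hlam.le
  calc ‖hatα t - αstar‖
      ≤ ‖Vinv t (∑ k ∈ Icc 1 t, adjoint (Mk k) (Mk k αstar + w k)) - αstar‖ :=
        hhat t ▸ hpne _ αstar hstarC
    _ = ‖Vinv t S - lamda • Vinv t αstar‖ := by
        rw [comp_sum_adjoint_sub_eq (hV t ▸ (hVinv t).2)]
    _ ≤ ‖Vinv t S‖ + lamda * ‖Vinv t αstar‖ := by
        simpa [norm_smul, abs_of_pos hlam] using norm_sub_le (Vinv t S) (lamda • Vinv t αstar)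
    _ ≤ _ := add_le_add hnoise hbias

theorem stmt19 (n p T0 : ℕ) (hT0 : 1 ≤ T0) (lamda sigma M mu delta : ℝ)
    (hlam : 0 < lamda) (hsig : 0 < sigma) (hmu : 0 < mu)
    (hdel : 0 < delta) (hdel1 : delta < 1) (hMnn : 0 ≤ M)
    (Mk : ℕ → (EuclideanSpace ℝ (Fin p) →L[ℝ] EuclideanSpace ℝ (Fin n)))
    (hM : ∀ t, ‖Mk t‖ ≤ M)
    (w : ℕ → EuclideanSpace ℝ (Fin n)) (αstar : EuclideanSpace ℝ (Fin p))
    (C : Set (EuclideanSpace ℝ (Fin p))) (hC : Convex ℝ C) (hstarC : αstar ∈ C)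
    (projC : EuclideanSpace ℝ (Fin p) → EuclideanSpace ℝ (Fin p))
    (hpC : ∀ z, projC z ∈ C)
    (hpne : ∀ z, ∀ c ∈ C, ‖projC z - c‖ ≤ ‖z - c‖)
    (V Vinv : ℕ → (EuclideanSpace ℝ (Fin p) →L[ℝ] EuclideanSpace ℝ (Fin p)))
    (hV : ∀ t, V t =
      lamda • (1 : EuclideanSpace ℝ (Fin p) →L[ℝ] EuclideanSpace ℝ (Fin p)) +
        ∑ k ∈ Finset.Icc 1 t, (ContinuousLinearMap.adjoint (Mk k)).comp (Mk k))
    (hVinv : ∀ t, (V t).comp (Vinv t) = 1 ∧ (Vinv t).comp (V t) = 1)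
    -- persistence of excitation: (1/t) ∑_{k=1}^t Mkᵀ Mk ⪰ mu I for t ≥ T0
    (hPE : ∀ t, T0 ≤ t → ∀ v : EuclideanSpace ℝ (Fin p),
      mu * t * ‖v‖ ^ 2 ≤
        ⟪v, (∑ k ∈ Finset.Icc 1 t, (ContinuousLinearMap.adjoint (Mk k)).comp (Mk k)) v⟫)
    -- the self-normalized martingale bound
    (hself : ∀ t : ℕ, 1 ≤ t →
      ⟪∑ k ∈ Finset.Icc 1 t, (ContinuousLinearMap.adjoint (Mk k)) (w k),
          (Vinv t) (∑ k ∈ Finset.Icc 1 t, (ContinuousLinearMap.adjoint (Mk k)) (w k))⟫ ≤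
        2 * sigma ^ 2 * Real.log ((1 / delta) *
          Real.sqrt (LinearMap.det (V t).toLinearMap) / Real.sqrt (lamda ^ p)))
    (hatα : ℕ → EuclideanSpace ℝ (Fin p))
    (hhat : ∀ t, hatα t = projC ((Vinv t)
      (∑ k ∈ Finset.Icc 1 t, (ContinuousLinearMap.adjoint (Mk k)) ((Mk k) αstar + w k)))) :
    ∀ t : ℕ, T0 ≤ t →
      ‖hatα t - αstar‖ ≤
        sigma / Real.sqrt (lamda + mu * t) *
            Real.sqrt (3 * p * Real.log ((1 / delta) * (1 + t * M ^ 2 / lamda))) +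
          lamda / (lamda + mu * t) * ‖αstar‖ :=
  stmt19_general n p T0 hT0 lamda sigma M mu delta hlam hsig hmu hdel hdel1 Mk hM w αstar C hstarC
    projC hpne V Vinv hV hVinv hPE hself hatα hhat
end
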